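/- arXiv:math/0403192 — 2 statements merged into one kernel-verified Lean document; each statement's English description precedes it below -/
import Mathlib

section
/- For all k ≥ 1, the Chebyshev polynomials satisfy the identity (X+2)·P_k(X)² - (P_{k+1}(X) + P_k(X))·(P_k(X) + P_{k-1}(X)) = 1. -/
/-- `cheb X n` is the Chebyshev polynomial value `P_{n-1}(X)`:
`P_{-1}=0`, `P_0=1`, `P_1 = X`, `P_k = X·P_{k-1} - P_{k-2}`. -/
def cheb {R : Type*} [CommRing R] (X : R) : ℕ → R
  | 0 => 0
  | 1 => 1
  | (n+2) => X * cheb X (n+1) - cheb X n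

lemma cheb_id_all {R : Type*} [CommRing R] (X : R) (k : ℕ) :
    (X + 2) * (cheb X (k + 1)) ^ 2 -
      (cheb X (k + 2) + cheb X (k + 1)) * (cheb X (k + 1) + cheb X k) = 1 := by
  induction k with
  | zero => simp [cheb]; ring
  | succ n ih =>
    have h : cheb X (n + 3) = X * cheb X (n + 2) - cheb X (n + 1) := rfl
    have h2 : cheb X (n + 2) = X * cheb X (n + 1) - cheb X n := rfl
    rw [show n + 1 + 2 = n + 3 from rfl, h, h2]
    rw [h2] at ih
    linear_combination ih

/-- For k ≥ 1: `(X+2)·P_k(X)² - (P_{k+1}(X)+P_k(X))·(P_k(X)+P_{k-1}(X)) = 1`. -/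
theorem chebyshev_identity_one {R : Type*} [CommRing R] (X : R) (k : ℕ) (hk : 1 ≤ k) :
    (X + 2) * (cheb X (k + 1)) ^ 2 -
      (cheb X (k + 2) + cheb X (k + 1)) * (cheb X (k + 1) + cheb X k) = 1 := by
  exact cheb_id_all X k
end

section
/- For all k ≥ 0, the Chebyshev polynomials satisfy the identity (P_k(X) + P_{k-1}(X))² - (X+2)·P_k(X)·P_{k-1}(X) = 1. -/
/-- For k ≥ 0: `(P_k(X)+P_{k-1}(X))² - (X+2)·P_k(X)·P_{k-1}(X) = 1`. -/
theorem chebyshev_identity_two {R : Type*} [CommRing R] (X : R) (k : ℕ) :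
    (cheb X (k + 1) + cheb X k) ^ 2 - (X + 2) * cheb X (k + 1) * cheb X k = 1 := by
  induction k with
  | zero => simp [cheb]
  | succ n ih =>
    have h : cheb X (n + 2) = X * cheb X (n + 1) - cheb X n := rfl
    rw [h]
    linear_combination ih
end
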